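/- Let V : (0,∞) → ℝ satisfy: V(r) ≥ K for 0 < r ≤ r_min, V(r) ≥ −C₂ for all r > 0, and V(r) = 0 for r ≥ r₀, where 0 < r_min < r₀ and C₂ > 0. Then there exists K' = K'(C₂, r_min, r₀) such that if K ≥ K', then for every N, every minimizer {x₁,…,x_N} of the energy E[V](X) = (1/2)∑_{i≠j}V(|x_i−x_j|) over N-point configurations in ℝ² satisfies min_{i≠j}|x_i−x_j| > r_min. -/
import Mathlib

open Metric Finset


set_option maxHeartbeats 2000000

private lemma swap_sum {N : ℕ} (F : Fin N → Fin N → ℝ) :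
    ∑ i, ∑ j ∈ Finset.univ.erase i, F i j = ∑ j, ∑ i ∈ Finset.univ.erase j, F i j := by
  have h : ∀ (G : Fin N → Fin N → ℝ), ∑ i, ∑ j ∈ Finset.univ.erase i, G i j
      = ∑ i, ∑ j, G i j - ∑ i, G i i := by
    intro G
    rw [← Finset.sum_sub_distrib]
    exact Finset.sum_congr rfl fun i _ => by
      rw [Finset.sum_erase_eq_sub (Finset.mem_univ i)]
  rw [h, h, Finset.sum_comm]

private lemma count_in_ball {N : ℕ} (x : Fin N → EuclideanSpace ℝ (Fin 2)) (rmin r₀ : ℝ)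
    (t : Finset (EuclideanSpace ℝ (Fin 2)))
    (hcov : closedBall (0 : EuclideanSpace ℝ (Fin 2)) r₀ ⊆ ⋃ y ∈ t, ball y (rmin/2))
    (m : ℕ)
    (hm : ∀ p : EuclideanSpace ℝ (Fin 2),
      (Finset.univ.filter fun l => dist p (x l) ≤ rmin/2).card ≤ m)
    (p : EuclideanSpace ℝ (Fin 2)) :
    (Finset.univ.filter fun b => dist p (x b) < r₀).card ≤ t.card * m := by
  have hsub : (Finset.univ.filter fun b => dist p (x b) < r₀) ⊆
      t.biUnion (fun c => Finset.univ.filter fun b => dist (p + c) (x b) ≤ rmin/2) := by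
    intro b hb
    rw [Finset.mem_filter] at hb
    have hmem : x b - p ∈ closedBall (0 : EuclideanSpace ℝ (Fin 2)) r₀ := by
      rw [mem_closedBall, dist_zero_right, ← dist_eq_norm, dist_comm]
      exact le_of_lt (by simpa [dist_comm] using hb.2)
    obtain ⟨U, ⟨c, rfl⟩, hU⟩ := hcov hmem
    simp only [Set.mem_iUnion, exists_prop] at hU
    obtain ⟨hc, hxc⟩ := hU
    rw [mem_ball, dist_eq_norm] at hxc
    rw [Finset.mem_biUnion]
    refine ⟨c, hc, ?_⟩
    rw [Finset.mem_filter]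
    refine ⟨Finset.mem_univ b, le_of_lt ?_⟩
    rw [dist_eq_norm]
    calc ‖p + c - x b‖ = ‖x b - p - c‖ := by rw [← norm_neg]; congr 1; abel
      _ < rmin/2 := hxc
  calc (Finset.univ.filter fun b => dist p (x b) < r₀).card
      ≤ _ := Finset.card_le_card hsub
    _ ≤ ∑ c ∈ t, (Finset.univ.filter fun b => dist (p + c) (x b) ≤ rmin/2).card :=
        Finset.card_biUnion_le
    _ ≤ ∑ c ∈ t, m := Finset.sum_le_sum fun c _ => hm _
    _ = t.card * m := by rw [Finset.sum_const, smul_eq_mul]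

private lemma one_le_abs_sub_of_ne (a b : ℕ) (h : a ≠ b) : (1:ℝ) ≤ |(a:ℝ) - b| := by
  have h2 : (a:ℤ) - b ≠ 0 := by
    simp only [sub_ne_zero]; exact_mod_cast h
  have := Int.one_le_abs h2
  calc (1:ℝ) ≤ |((a:ℤ) - b : ℤ)| := by exact_mod_cast this
    _ = |(a:ℝ) - b| := by push_cast; ring_nf

/-- The pairwise interaction energy E[V](X) = (1/2)∑_{i≠j} V(|x_i−x_j|) of a configuration
x : Fin N → ℝ². -/
noncomputable def pairEnergy (V : ℝ → ℝ) {N : ℕ} (x : Fin N → EuclideanSpace ℝ (Fin 2)) : ℝ :=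
  (1 / 2) * ∑ i, ∑ j ∈ Finset.univ.erase i, V (dist (x i) (x j))

/-- Given 0 < r_min < r₀ and C₂ > 0, there is K' = K'(C₂, r_min, r₀) such that for every
potential V with V ≥ K ≥ K' on (0, r_min], V ≥ −C₂ everywhere, and V = 0 on [r₀, ∞),
every minimizer of the energy over N-point configurations has all interpoint distances
strictly greater than r_min. -/
theorem minimizer_separation (rmin r₀ C₂ : ℝ) (hrmin : 0 < rmin) (hr₀ : rmin < r₀)
    (hC₂ : 0 < C₂) :
    ∃ K' : ℝ, ∀ K : ℝ, K' ≤ K → ∀ V : ℝ → ℝ,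
      (∀ r : ℝ, 0 < r → r ≤ rmin → K ≤ V r) →
      (∀ r : ℝ, 0 < r → -C₂ ≤ V r) →
      (∀ r : ℝ, r₀ ≤ r → V r = 0) →
      ∀ N : ℕ, ∀ x : Fin N → EuclideanSpace ℝ (Fin 2), Function.Injective x →
        (∀ y : Fin N → EuclideanSpace ℝ (Fin 2), Function.Injective y →
          pairEnergy V x ≤ pairEnergy V y) →
        ∀ i j : Fin N, i ≠ j → rmin < dist (x i) (x j) := by
  -- finite cover of the ball of radius r₀ by balls of radius rmin/2
  obtain ⟨t, hcov⟩ : ∃ t : Finset (EuclideanSpace ℝ (Fin 2)),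
      closedBall (0 : EuclideanSpace ℝ (Fin 2)) r₀ ⊆ ⋃ y ∈ t, ball y (rmin/2) := by
    have h := (isCompact_closedBall (0 : EuclideanSpace ℝ (Fin 2)) r₀).totallyBounded
    rw [Metric.totallyBounded_iff] at h
    obtain ⟨s, hfin, hs⟩ := h (rmin/2) (by linarith)
    exact ⟨hfin.toFinset, by simpa [Set.Finite.mem_toFinset] using hs⟩
  set P : ℝ := (t.card : ℝ) with hP
  have hP0 : 0 ≤ P := Nat.cast_nonneg _
  refine ⟨4 * C₂ * P + 1, ?_⟩
  intro K hK V hVK hVC hV0 N x hinj hmin i j hij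
  by_contra hcon
  push_neg at hcon
  have hKpos : 0 < K := by nlinarith
  have hr₀pos : 0 < r₀ := lt_trans hrmin hr₀
  -- maximal count of points in a ball of radius rmin/2
  set cnt : EuclideanSpace ℝ (Fin 2) → ℕ :=
    fun p => (Finset.univ.filter fun l => dist p (x l) ≤ rmin/2).card with hcnt_def
  have hbdd : BddAbove (Set.range cnt) := by
    refine ⟨N, ?_⟩
    rintro _ ⟨p, rfl⟩
    simpa using (Finset.card_filter_le Finset.univ _).trans (by simp)
  have hne : (Set.range cnt).Nonempty := ⟨cnt 0, ⟨0, rfl⟩⟩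
  obtain ⟨p₀, hp₀⟩ := Nat.sSup_mem hne hbdd
  set m : ℕ := sSup (Set.range cnt) with hm_def
  have hm : ∀ p, cnt p ≤ m := fun p => le_csSup hbdd ⟨p, rfl⟩
  set S : Finset (Fin N) := Finset.univ.filter fun l => dist p₀ (x l) ≤ rmin/2 with hS_def
  have hScard : S.card = m := hp₀
  -- m ≥ 2
  have hm2 : 2 ≤ m := by
    have hmid : cnt (midpoint ℝ (x i) (x j)) ≥ 2 := by
      have hsub : ({i, j} : Finset (Fin N)) ⊆
          Finset.univ.filter fun l => dist (midpoint ℝ (x i) (x j)) (x l) ≤ rmin/2 := by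
        intro l hl
        rw [Finset.mem_insert, Finset.mem_singleton] at hl
        rw [Finset.mem_filter]
        refine ⟨Finset.mem_univ l, ?_⟩
        rcases hl with rfl | rfl
        · rw [dist_midpoint_left]
          simp only [Real.norm_ofNat]
          linarith
        · rw [dist_midpoint_right]
          simp only [Real.norm_ofNat]
          linarith
      calc 2 = ({i, j} : Finset (Fin N)).card := (Finset.card_pair hij).symm
        _ ≤ _ := Finset.card_le_card hsub
    exact le_trans hmid (hm _)
  -- every point of S is within rmin/2 of p₀
  have hSdist : ∀ l ∈ S, dist p₀ (x l) ≤ rmin/2 := fun l hl => (Finset.mem_filter.mp hl).2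
  -- counting points within r₀ of any point
  have hcnt_r₀ : ∀ p, ((Finset.univ.filter fun b => dist p (x b) < r₀).card : ℝ) ≤ P * m := by
    intro p
    have h := count_in_ball x rmin r₀ t hcov m hm p
    calc ((Finset.univ.filter fun b => dist p (x b) < r₀).card : ℝ)
        ≤ ((t.card * m : ℕ) : ℝ) := Nat.cast_le.mpr h
      _ = P * m := by push_cast; ring
  -- the competitor configuration: cluster S sent to infinity, spread out
  have hNne : (Finset.univ : Finset (Fin N)).Nonempty := ⟨i, Finset.mem_univ i⟩
  set e : EuclideanSpace ℝ (Fin 2) := EuclideanSpace.single (0 : Fin 2) (1:ℝ) with he_def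
  have he : ‖e‖ = 1 := by rw [he_def, EuclideanSpace.norm_single]; norm_num
  set M : ℝ := Finset.univ.sup' hNne (fun l => ‖x l‖) with hM_def
  have hMle : ∀ l, ‖x l‖ ≤ M := fun l => by
    rw [hM_def]; exact Finset.le_sup' (fun l => ‖x l‖) (Finset.mem_univ l)
  have hM0 : 0 ≤ M := le_trans (norm_nonneg (x i)) (hMle i)
  set c : Fin N → ℝ := fun l => M + r₀ + r₀ * l.val with hc_def
  have hcge : ∀ l, M + r₀ ≤ c l := by
    intro l
    have : 0 ≤ r₀ * l.val := mul_nonneg (le_of_lt hr₀pos) (Nat.cast_nonneg _)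
    simp only [hc_def]; linarith
  set y : Fin N → EuclideanSpace ℝ (Fin 2) := fun l => if l ∈ S then (c l) • e else x l
    with hy_def
  -- distances in y
  have hyS : ∀ l ∈ S, y l = (c l) • e := fun l hl => by simp only [hy_def, if_pos hl]
  have hyout : ∀ l, l ∉ S → y l = x l := fun l hl => by simp only [hy_def, if_neg hl]
  have hmixed : ∀ a ∈ S, ∀ b, b ∉ S → r₀ ≤ dist (y a) (y b) := by
    intro a ha b hb
    rw [hyS a ha, hyout b hb, dist_eq_norm]
    have h1 : ‖(c a) • e‖ = c a := by
      rw [norm_smul, he, mul_one, Real.norm_eq_abs, abs_of_nonneg (by linarith [hcge a])]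
    calc r₀ = (M + r₀) - M := by ring
      _ ≤ ‖(c a) • e‖ - ‖x b‖ := by
          have := hcge a; have := hMle b; rw [h1]; linarith
      _ ≤ ‖(c a) • e - x b‖ := norm_sub_norm_le _ _
  have hSS : ∀ a ∈ S, ∀ b ∈ S, a ≠ b → r₀ ≤ dist (y a) (y b) := by
    intro a ha b hb hab
    rw [hyS a ha, hyS b hb, dist_eq_norm, ← sub_smul, norm_smul, he, mul_one,
      Real.norm_eq_abs]
    have hcc : c a - c b = r₀ * ((a.val : ℝ) - b.val) := by simp only [hc_def]; ring
    rw [hcc, abs_mul, abs_of_nonneg (le_of_lt hr₀pos)]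
    have hne : (a.val : ℕ) ≠ b.val := fun h => hab (Fin.ext h)
    have := one_le_abs_sub_of_ne a.val b.val hne
    nlinarith
  have hyfar : ∀ a b : Fin N, a ≠ b → (a ∈ S ∨ b ∈ S) → r₀ ≤ dist (y a) (y b) := by
    intro a b hab hor
    by_cases ha : a ∈ S
    · by_cases hb : b ∈ S
      · exact hSS a ha b hb hab
      · exact hmixed a ha b hb
    · have hb : b ∈ S := hor.resolve_left ha
      rw [dist_comm]
      exact hmixed b hb a ha
  have hyinj : Function.Injective y := by
    intro a b hab
    by_contra hne
    by_cases h : a ∈ S ∨ b ∈ S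
    · have := hyfar a b hne h
      rw [hab, dist_self] at this
      linarith
    · push_neg at h
      exact hne (hinj (by rwa [hyout a h.1, hyout b h.2] at hab))
  -- energy of the competitor
  have hTy : ∑ a, ∑ b ∈ Finset.univ.erase a, V (dist (y a) (y b))
      = ∑ a, ∑ b ∈ Finset.univ.erase a,
          (if a ∈ S ∨ b ∈ S then 0 else V (dist (x a) (x b))) := by
    refine Finset.sum_congr rfl fun a _ => Finset.sum_congr rfl fun b hb => ?_
    have hba : b ≠ a := (Finset.mem_erase.mp hb).1
    by_cases h : a ∈ S ∨ b ∈ S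
    · rw [if_pos h, hV0 _ (hyfar a b hba.symm h)]
    · push_neg at h
      rw [if_neg (by tauto), hyout a h.1, hyout b h.2]
  have hmin' := hmin y hyinj
  simp only [pairEnergy] at hmin'
  rw [hTy] at hmin'
  have hD : ∑ a, ∑ b ∈ Finset.univ.erase a,
      (if a ∈ S ∨ b ∈ S then V (dist (x a) (x b)) else 0) ≤ 0 := by
    have heq : ∑ a, ∑ b ∈ Finset.univ.erase a,
        (if a ∈ S ∨ b ∈ S then V (dist (x a) (x b)) else 0)
        = (∑ a, ∑ b ∈ Finset.univ.erase a, V (dist (x a) (x b)))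
          - ∑ a, ∑ b ∈ Finset.univ.erase a,
              (if a ∈ S ∨ b ∈ S then 0 else V (dist (x a) (x b))) := by
      simp only [← Finset.sum_sub_distrib]
      refine Finset.sum_congr rfl fun a _ => Finset.sum_congr rfl fun b _ => ?_
      by_cases h : a ∈ S ∨ b ∈ S <;> simp [h]
    rw [heq]
    linarith
  -- pointwise lower bound
  set χ₁ : Fin N → Fin N → ℝ := fun a b =>
    if a ∈ S ∧ dist (x a) (x b) < r₀ ∧ ¬(a ∈ S ∧ b ∈ S) then 1 else 0 with hχ₁_def
  set χ₂ : Fin N → Fin N → ℝ := fun a b =>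
    if b ∈ S ∧ dist (x a) (x b) < r₀ ∧ ¬(a ∈ S ∧ b ∈ S) then 1 else 0 with hχ₂_def
  have hlb : ∀ a : Fin N, ∀ b ∈ Finset.univ.erase a,
      (if a ∈ S ∧ b ∈ S then K else 0) - C₂ * (χ₁ a b + χ₂ a b)
      ≤ (if a ∈ S ∨ b ∈ S then V (dist (x a) (x b)) else 0) := by
    intro a b hb
    have hba : b ≠ a := (Finset.mem_erase.mp hb).1
    have hdpos : 0 < dist (x a) (x b) := dist_pos.mpr (fun h => hba (hinj h).symm)
    simp only [hχ₁_def, hχ₂_def]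
    by_cases hboth : a ∈ S ∧ b ∈ S
    · have hd : dist (x a) (x b) ≤ rmin := by
        have h1 := hSdist a hboth.1
        have h2 := hSdist b hboth.2
        calc dist (x a) (x b) ≤ dist (x a) p₀ + dist p₀ (x b) := dist_triangle _ _ _
          _ ≤ rmin/2 + rmin/2 := by rw [dist_comm (x a) p₀]; linarith
          _ = rmin := by ring
      rw [if_pos hboth, if_pos (Or.inl hboth.1), if_neg (by tauto), if_neg (by tauto)]
      have := hVK _ hdpos hd
      linarith
    · rw [if_neg hboth]
      by_cases hor : a ∈ S ∨ b ∈ S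
      · rw [if_pos hor]
        by_cases hdr : dist (x a) (x b) < r₀
        · have hV := hVC _ hdpos
          rcases hor with ha | hb2
          · have hbS : b ∉ S := fun h => hboth ⟨ha, h⟩
            rw [if_pos ⟨ha, hdr, hboth⟩, if_neg (by tauto)]
            linarith
          · have haS : a ∉ S := fun h => hboth ⟨h, hb2⟩
            rw [if_neg (by tauto), if_pos ⟨hb2, hdr, hboth⟩]
            linarith
        · push_neg at hdr
          rw [hV0 _ hdr, if_neg (fun hc => absurd hc.2.1 (not_lt.mpr hdr)),
            if_neg (fun hc => absurd hc.2.1 (not_lt.mpr hdr))]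
          simp
      · rw [if_neg hor, if_neg (by tauto), if_neg (by tauto)]
        simp
  -- summed lower bound
  have hsum : (∑ a, ∑ b ∈ Finset.univ.erase a, (if a ∈ S ∧ b ∈ S then K else 0))
      - C₂ * ((∑ a, ∑ b ∈ Finset.univ.erase a, χ₁ a b)
            + (∑ a, ∑ b ∈ Finset.univ.erase a, χ₂ a b)) ≤ 0 := by
    have h1 : ∑ a, ∑ b ∈ Finset.univ.erase a,
        ((if a ∈ S ∧ b ∈ S then K else 0) - C₂ * (χ₁ a b + χ₂ a b))
        ≤ ∑ a, ∑ b ∈ Finset.univ.erase a,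
            (if a ∈ S ∨ b ∈ S then V (dist (x a) (x b)) else 0) :=
      Finset.sum_le_sum fun a _ => Finset.sum_le_sum fun b hb => hlb a b hb
    have h2 : ∑ a, ∑ b ∈ Finset.univ.erase a,
        ((if a ∈ S ∧ b ∈ S then K else 0) - C₂ * (χ₁ a b + χ₂ a b))
        = (∑ a, ∑ b ∈ Finset.univ.erase a, (if a ∈ S ∧ b ∈ S then K else 0))
          - C₂ * ((∑ a, ∑ b ∈ Finset.univ.erase a, χ₁ a b)
                + (∑ a, ∑ b ∈ Finset.univ.erase a, χ₂ a b)) := by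
      simp only [Finset.sum_sub_distrib, Finset.sum_add_distrib, ← Finset.mul_sum]
    rw [h2] at h1
    linarith
  -- bound on the repulsive part
  have hA : (m : ℝ) * (((m - 1 : ℕ) : ℝ) * K)
      ≤ ∑ a, ∑ b ∈ Finset.univ.erase a, (if a ∈ S ∧ b ∈ S then K else 0) := by
    have hstep : ∀ a ∈ S, ∑ b ∈ Finset.univ.erase a, (if a ∈ S ∧ b ∈ S then K else 0)
        = ((m - 1 : ℕ) : ℝ) * K := by
      intro a ha
      have h1 : ∑ b ∈ Finset.univ.erase a, (if a ∈ S ∧ b ∈ S then K else 0)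
          = ∑ b ∈ Finset.univ.erase a, (if b ∈ S then K else 0) :=
        Finset.sum_congr rfl fun b _ => by simp [ha]
      rw [h1, Finset.sum_ite, Finset.sum_const, Finset.sum_const_zero, add_zero]
      have h2 : (Finset.univ.erase a).filter (· ∈ S) = S.erase a := by
        ext b
        simp only [Finset.mem_filter, Finset.mem_erase, Finset.mem_univ, true_and, and_true]
      rw [h2, Finset.card_erase_of_mem ha, hScard, nsmul_eq_mul]
    calc (m:ℝ) * (((m-1:ℕ):ℝ) * K) = ∑ _a ∈ S, ((m-1:ℕ):ℝ) * K := by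
          rw [Finset.sum_const, hScard, nsmul_eq_mul]
      _ = ∑ a ∈ S, ∑ b ∈ Finset.univ.erase a, (if a ∈ S ∧ b ∈ S then K else 0) :=
          (Finset.sum_congr rfl fun a ha => (hstep a ha).symm)
      _ ≤ ∑ a, ∑ b ∈ Finset.univ.erase a, (if a ∈ S ∧ b ∈ S then K else 0) := by
          refine Finset.sum_le_sum_of_subset_of_nonneg (Finset.subset_univ S) ?_
          intro a _ _
          refine Finset.sum_nonneg fun b _ => ?_
          by_cases h : a ∈ S ∧ b ∈ S <;> simp [h, le_of_lt hKpos]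
  -- bounds on the attractive parts
  have hB₁ : ∑ a, ∑ b ∈ Finset.univ.erase a, χ₁ a b ≤ (m:ℝ) * (P * m) := by
    have hstep : ∀ a : Fin N, ∑ b ∈ Finset.univ.erase a, χ₁ a b
        ≤ (if a ∈ S then P * (m:ℝ) else 0) := by
      intro a
      by_cases ha : a ∈ S
      · rw [if_pos ha]
        calc ∑ b ∈ Finset.univ.erase a, χ₁ a b
            ≤ ∑ b ∈ Finset.univ.erase a, (if dist (x a) (x b) < r₀ then (1:ℝ) else 0) := by
              refine Finset.sum_le_sum fun b _ => ?_
              simp only [hχ₁_def]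
              by_cases h : a ∈ S ∧ dist (x a) (x b) < r₀ ∧ ¬(a ∈ S ∧ b ∈ S)
              · rw [if_pos h, if_pos h.2.1]
              · rw [if_neg h]
                by_cases h2 : dist (x a) (x b) < r₀ <;> simp [h2]
          _ ≤ ∑ b, (if dist (x a) (x b) < r₀ then (1:ℝ) else 0) := by
              refine Finset.sum_le_sum_of_subset_of_nonneg (Finset.erase_subset _ _) ?_
              intro b _ _
              by_cases h2 : dist (x a) (x b) < r₀ <;> simp [h2]
          _ = ((Finset.univ.filter fun b => dist (x a) (x b) < r₀).card : ℝ) := by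
              rw [Finset.sum_boole]
          _ ≤ P * m := hcnt_r₀ (x a)
      · rw [if_neg ha]
        refine le_of_eq (Finset.sum_eq_zero fun b _ => ?_)
        simp only [hχ₁_def]
        rw [if_neg (fun hc => ha hc.1)]
    calc ∑ a, ∑ b ∈ Finset.univ.erase a, χ₁ a b
        ≤ ∑ a, (if a ∈ S then P * (m:ℝ) else 0) := Finset.sum_le_sum fun a _ => hstep a
      _ = ∑ _a ∈ S, P * (m:ℝ) := by
          rw [← Finset.sum_filter]
          congr 1
          ext a
          simp
      _ = (m:ℝ) * (P * m) := by rw [Finset.sum_const, hScard, nsmul_eq_mul]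
  have hB₂ : ∑ a, ∑ b ∈ Finset.univ.erase a, χ₂ a b ≤ (m:ℝ) * (P * m) := by
    rw [swap_sum]
    have hstep : ∀ b : Fin N, ∑ a ∈ Finset.univ.erase b, χ₂ a b
        ≤ (if b ∈ S then P * (m:ℝ) else 0) := by
      intro b
      by_cases hbS : b ∈ S
      · rw [if_pos hbS]
        calc ∑ a ∈ Finset.univ.erase b, χ₂ a b
            ≤ ∑ a ∈ Finset.univ.erase b, (if dist (x b) (x a) < r₀ then (1:ℝ) else 0) := by
              refine Finset.sum_le_sum fun a _ => ?_
              simp only [hχ₂_def]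
              by_cases h : b ∈ S ∧ dist (x a) (x b) < r₀ ∧ ¬(a ∈ S ∧ b ∈ S)
              · rw [if_pos h, if_pos (by rw [dist_comm]; exact h.2.1)]
              · rw [if_neg h]
                by_cases h2 : dist (x b) (x a) < r₀ <;> simp [h2]
          _ ≤ ∑ a, (if dist (x b) (x a) < r₀ then (1:ℝ) else 0) := by
              refine Finset.sum_le_sum_of_subset_of_nonneg (Finset.erase_subset _ _) ?_
              intro a _ _
              by_cases h2 : dist (x b) (x a) < r₀ <;> simp [h2]
          _ = ((Finset.univ.filter fun a => dist (x b) (x a) < r₀).card : ℝ) := by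
              rw [Finset.sum_boole]
          _ ≤ P * m := hcnt_r₀ (x b)
      · rw [if_neg hbS]
        refine le_of_eq (Finset.sum_eq_zero fun a _ => ?_)
        simp only [hχ₂_def]
        rw [if_neg (fun hc => hbS hc.1)]
    calc ∑ b, ∑ a ∈ Finset.univ.erase b, χ₂ a b
        ≤ ∑ b, (if b ∈ S then P * (m:ℝ) else 0) := Finset.sum_le_sum fun b _ => hstep b
      _ = ∑ _b ∈ S, P * (m:ℝ) := by
          rw [← Finset.sum_filter]
          congr 1
          ext b
          simp
      _ = (m:ℝ) * (P * m) := by rw [Finset.sum_const, hScard, nsmul_eq_mul]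
  -- final contradiction
  have hmR : (2:ℝ) ≤ (m:ℝ) := by exact_mod_cast hm2
  have hm1 : ((m-1:ℕ):ℝ) = (m:ℝ) - 1 := by
    rw [Nat.cast_sub (by omega)]
    norm_num
  rw [hm1] at hA
  have hCB : C₂ * ((∑ a, ∑ b ∈ Finset.univ.erase a, χ₁ a b)
      + (∑ a, ∑ b ∈ Finset.univ.erase a, χ₂ a b)) ≤ C₂ * (2 * ((m:ℝ) * (P * m))) := by
    apply mul_le_mul_of_nonneg_left _ hC₂.le
    linarith
  have hfinal : (m:ℝ) * (((m:ℝ) - 1) * K) ≤ C₂ * (2 * ((m:ℝ) * (P * m))) := by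
    linarith
  have hkey : 0 ≤ C₂ * P * (m:ℝ) * ((m:ℝ) - 2) :=
    mul_nonneg (mul_nonneg (mul_nonneg hC₂.le hP0) (by linarith)) (by linarith)
  have hm0 : (0:ℝ) ≤ (m:ℝ) := by linarith
  have hmm2 : (m:ℝ) * 2 ≤ (m:ℝ) * (m:ℝ) := mul_le_mul_of_nonneg_left hmR hm0
  have hmm : 0 ≤ (m:ℝ) * ((m:ℝ) - 1) := by nlinarith
  have h5 := mul_le_mul_of_nonneg_left hK hmm
  nlinarith [hfinal, hkey, hmm2, h5, hmR]
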